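/- arXiv:2506.06932 — 4 statements merged into one kernel-verified Lean document; each statement's English description precedes it below -/
import Mathlib

section
/- For a prime p ≥ 3 and m ≥ 1, the map sending A ∈ K_m to A^p induces a group isomorphism from the quotient K_m/K_{m+1} onto K_{m+1}/K_{m+2}, where K_j is the j-th principal congruence subgroup of GL_n(ℤ_p). Moreover each quotient K_m/K_{m+1} is isomorphic (as a group) to the additive group of n×n matrices over 𝔽_p. -/
/-!
For `m ≥ 1` write `A ∈ K_m` as `1 + p^m X`. Then `A ↦ X mod p` is a homomorphism onto
`M_n(𝔽_p)`: the cross term `p^{2m} X Y` of a product dies mod `p^{m+1}`, and every `1 + p^m X`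
is invertible because its determinant is `1` mod `p`. Its kernel is `K_{m+1}`.
By the binomial theorem `(1 + p^m X)^p ≡ 1 + p^{m+1} X mod p^{m+2}`: the terms `2 ≤ k < p`
carry `p · p^{2m}`, and the last one `p^{mp}` with `mp ≥ m + 2` since `p ≥ 3`. So under these
identifications for `m` and `m + 1` the `p`-th power map becomes the identity of `M_n(𝔽_p)`.
-/

open Matrix

/-- The `j`-th principal congruence subgroup of `GL d ℤ_[p]`. -/
def congrSubgroup (p : ℕ) [Fact p.Prime] (d j : ℕ) : Subgroup (GL (Fin d) ℤ_[p]) where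
  carrier := {M | ∀ i k, (p : ℤ_[p]) ^ j ∣ ((M : Matrix (Fin d) (Fin d) ℤ_[p]) - 1) i k}
  one_mem' := by
    intro i k
    simp
  mul_mem' := by
    intro A B hA hB i k
    have key : ((A * B : GL (Fin d) ℤ_[p]) : Matrix (Fin d) (Fin d) ℤ_[p]) - 1
        = ((A : Matrix (Fin d) (Fin d) ℤ_[p]) - 1) * (B : Matrix (Fin d) (Fin d) ℤ_[p])
          + ((B : Matrix (Fin d) (Fin d) ℤ_[p]) - 1) := by
      rw [Units.val_mul]
      noncomm_ring
    rw [key, Matrix.add_apply, Matrix.mul_apply]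
    exact dvd_add (Finset.dvd_sum fun l _ => (hA i l).mul_right _) (hB i k)
  inv_mem' := by
    intro A hA i k
    have h1 : ((A⁻¹ : GL (Fin d) ℤ_[p]) : Matrix (Fin d) (Fin d) ℤ_[p])
        * (A : Matrix (Fin d) (Fin d) ℤ_[p]) = 1 := by
      rw [← Units.val_mul, inv_mul_cancel, Units.val_one]
    have key : ((A⁻¹ : GL (Fin d) ℤ_[p]) : Matrix (Fin d) (Fin d) ℤ_[p]) - 1
        = ((A⁻¹ : GL (Fin d) ℤ_[p]) : Matrix (Fin d) (Fin d) ℤ_[p])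
          * ((1 : Matrix (Fin d) (Fin d) ℤ_[p]) - (A : Matrix (Fin d) (Fin d) ℤ_[p])) := by
      rw [Matrix.mul_sub, Matrix.mul_one, h1]
    rw [key, Matrix.mul_apply]
    refine Finset.dvd_sum fun l _ => Dvd.dvd.mul_left ?_ _
    have : ((1 : Matrix (Fin d) (Fin d) ℤ_[p]) - (A : Matrix (Fin d) (Fin d) ℤ_[p])) l k
        = -(((A : Matrix (Fin d) (Fin d) ℤ_[p]) - 1) l k) := by
      simp [Matrix.sub_apply]
    rw [this]
    exact (hA l k).neg_right

instance congrSubgroup_normal (p : ℕ) [Fact p.Prime] (d j : ℕ) :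
    (congrSubgroup p d j).Normal := by
  constructor
  intro M hM g i k
  have hgg : (g : Matrix (Fin d) (Fin d) ℤ_[p]) * ((g⁻¹ : GL (Fin d) ℤ_[p]) : Matrix (Fin d) (Fin d) ℤ_[p]) = 1 := by
    rw [← Units.val_mul, mul_inv_cancel, Units.val_one]
  have key : ((g * M * g⁻¹ : GL (Fin d) ℤ_[p]) : Matrix (Fin d) (Fin d) ℤ_[p]) - 1
      = (g : Matrix (Fin d) (Fin d) ℤ_[p]) * (((M : Matrix (Fin d) (Fin d) ℤ_[p]) - 1))
        * ((g⁻¹ : GL (Fin d) ℤ_[p]) : Matrix (Fin d) (Fin d) ℤ_[p]) := by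
    rw [Units.val_mul, Units.val_mul, Matrix.mul_sub, Matrix.mul_one, Matrix.sub_mul, hgg]
  rw [key, Matrix.mul_apply]
  refine Finset.dvd_sum fun l _ => Dvd.dvd.mul_right ?_ _
  rw [Matrix.mul_apply]
  exact Finset.dvd_sum fun m _ => (hM m l).mul_left _

theorem exists_one_add_pow_smul_pow_prime_eq {S A : Type*} [CommRing S] [Ring A] [Algebra S A]
    {p : ℕ} (hp : p.Prime) (hp3 : 3 ≤ p) {m : ℕ} (hm : 0 < m) (x : A) :
    ∃ y : A, (1 + (p : S) ^ m • x) ^ p = 1 + (p : S) ^ (m + 1) • (x + (p : S) • y) := by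
  -- The library identity needs commutativity: apply it in `ℤ[X]`, then evaluate at `x`.
  obtain ⟨y, hy⟩ := ZMod.exists_one_add_mul_pow_prime_eq (R := Polynomial ℤ)
    (u := (p : Polynomial ℤ) ^ m) (v := p) hp (dvd_pow_self _ hm.ne')
    (by rw [← pow_succ', ← pow_succ, ← pow_mul]; exact pow_dvd_pow _ (by nlinarith))
    Polynomial.X
  refine ⟨Polynomial.aeval x y, ?_⟩
  simpa [Algebra.smul_def, pow_succ', mul_assoc] using congrArg (Polynomial.aeval x) hy

theorem PadicInt.map_toZMod_eq_zero_iff {ι κ : Type*} {p : ℕ} [Fact p.Prime]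
    {X : Matrix ι κ ℤ_[p]} : X.map PadicInt.toZMod = 0 ↔ ∃ Y, X = (p : ℤ_[p]) • Y := by
  have h (x : ℤ_[p]) : PadicInt.toZMod x = 0 ↔ (p : ℤ_[p]) ∣ x := by
    rw [← RingHom.mem_ker, PadicInt.ker_toZMod, PadicInt.maximalIdeal_eq_span_p,
      Ideal.mem_span_singleton]
  refine ⟨fun hX => ?_, fun ⟨Y, hY⟩ => ?_⟩
  · choose Y hY using fun i k => (h (X i k)).1 (congrFun₂ hX i k)
    exact ⟨Y, Matrix.ext hY⟩
  · ext i k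
    exact (h _).2 ⟨Y i k, by simp [hY]⟩

theorem PadicInt.map_toZMod_add_pow_smul {ι κ : Type*} {p : ℕ} [Fact p.Prime] {k : ℕ}
    (hk : 0 < k) (X Y : Matrix ι κ ℤ_[p]) :
    (X + (p : ℤ_[p]) ^ k • Y).map PadicInt.toZMod = X.map PadicInt.toZMod := by
  have hY : ((p : ℤ_[p]) ^ k • Y).map PadicInt.toZMod = 0 := PadicInt.map_toZMod_eq_zero_iff.2
    ⟨(p : ℤ_[p]) ^ (k - 1) • Y, by rw [smul_smul, ← pow_succ', Nat.sub_add_cancel hk]⟩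
  rw [Matrix.map_add _ (map_add _), hY, add_zero]

theorem PadicInt.isUnit_one_add_pow_smul {ι : Type*} [Fintype ι] [DecidableEq ι] {p : ℕ}
    [Fact p.Prime] {k : ℕ} (hk : 0 < k) (X : Matrix ι ι ℤ_[p]) :
    IsUnit (1 + (p : ℤ_[p]) ^ k • X) := by
  have : IsLocalHom (PadicInt.toZMod (p := p)) := .of_surjective _ (ZMod.ringHom_surjective _)
  rw [Matrix.isUnit_iff_isUnit_det]
  refine isUnit_of_map_unit PadicInt.toZMod _ ?_
  rw [RingHom.map_det, RingHom.mapMatrix_apply, PadicInt.map_toZMod_add_pow_smul hk,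
    Matrix.map_one _ (map_zero _) (map_one _), det_one]
  exact isUnit_one

namespace congrSubgroup

variable {p : ℕ} [Fact p.Prime] {d : ℕ}

theorem mem_iff_exists_eq_one_add_smul {j : ℕ} {M : GL (Fin d) ℤ_[p]} :
    M ∈ congrSubgroup p d j ↔
      ∃ X, (M : Matrix (Fin d) (Fin d) ℤ_[p]) = 1 + (p : ℤ_[p]) ^ j • X := by
  refine ⟨fun h => ?_, fun ⟨X, hX⟩ i k => ⟨X i k, by simp [hX]⟩⟩
  choose X hX using h
  exact ⟨X, sub_eq_iff_eq_add'.1 (Matrix.ext hX)⟩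

variable {j : ℕ}

noncomputable def offset (M : congrSubgroup p d j) : Matrix (Fin d) (Fin d) ℤ_[p] :=
  (mem_iff_exists_eq_one_add_smul.1 M.2).choose

theorem coe_eq_one_add_smul_offset (M : congrSubgroup p d j) :
    ((M : GL (Fin d) ℤ_[p]) : Matrix (Fin d) (Fin d) ℤ_[p]) = 1 + (p : ℤ_[p]) ^ j • offset M :=
  (mem_iff_exists_eq_one_add_smul.1 M.2).choose_spec

theorem offset_eq_of_coe_eq {M : congrSubgroup p d j} {X : Matrix (Fin d) (Fin d) ℤ_[p]}
    (h : ((M : GL (Fin d) ℤ_[p]) : Matrix (Fin d) (Fin d) ℤ_[p]) = 1 + (p : ℤ_[p]) ^ j • X) :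
    offset M = X := by
  have hp : (p : ℤ_[p]) ^ j ≠ 0 := pow_ne_zero _ (Nat.cast_ne_zero.2 (Fact.out : p.Prime).ne_zero)
  exact smul_right_injective _ hp (add_left_cancel ((coe_eq_one_add_smul_offset M).symm.trans h))

variable {m : ℕ}

noncomputable def residue (hm : 0 < m) :
    congrSubgroup p d m →* Multiplicative (Matrix (Fin d) (Fin d) (ZMod p)) where
  toFun M := .ofAdd ((offset M).map PadicInt.toZMod)
  map_one' := by
    rw [offset_eq_of_coe_eq (X := 0) (by simp)]
    simp
  map_mul' M N := by
    let c := (p : ℤ_[p]) ^ m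
    have h : (((M * N : congrSubgroup p d m) : GL (Fin d) ℤ_[p]) : Matrix (Fin d) (Fin d) ℤ_[p])
        = 1 + c • (offset M + offset N + c • (offset M * offset N)) := by
      rw [Subgroup.coe_mul, Units.val_mul, coe_eq_one_add_smul_offset M,
        coe_eq_one_add_smul_offset N]
      simp only [mul_add, add_mul, one_mul, mul_one, smul_add, smul_mul_assoc, mul_smul_comm]
      abel
    rw [offset_eq_of_coe_eq h, PadicInt.map_toZMod_add_pow_smul hm,
      Matrix.map_add _ (map_add _), ofAdd_add]

theorem residue_eq_of_coe_eq (hm : 0 < m) {M : congrSubgroup p d m}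
    {X : Matrix (Fin d) (Fin d) ℤ_[p]}
    (h : ((M : GL (Fin d) ℤ_[p]) : Matrix (Fin d) (Fin d) ℤ_[p]) = 1 + (p : ℤ_[p]) ^ m • X) :
    residue hm M = .ofAdd (X.map PadicInt.toZMod) :=
  congrArg (fun Y => Multiplicative.ofAdd (Y.map PadicInt.toZMod)) (offset_eq_of_coe_eq h)

theorem ker_residue (hm : 0 < m) :
    (residue hm).ker = (congrSubgroup p d (m + 1)).subgroupOf (congrSubgroup p d m) := by
  ext M
  rw [MonoidHom.mem_ker, Subgroup.mem_subgroupOf, mem_iff_exists_eq_one_add_smul]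
  change Multiplicative.ofAdd _ = 1 ↔ _
  rw [ofAdd_eq_one, PadicInt.map_toZMod_eq_zero_iff]
  constructor
  · rintro ⟨Y, hY⟩
    exact ⟨Y, by rw [coe_eq_one_add_smul_offset, hY, smul_smul, ← pow_succ]⟩
  · rintro ⟨Y, hY⟩
    exact ⟨Y, offset_eq_of_coe_eq (by rw [hY, pow_succ, ← smul_smul])⟩

theorem residue_surjective (hm : 0 < m) : Function.Surjective (residue (p := p) (d := d) hm) := by
  intro Y
  set X := (Multiplicative.toAdd Y).map
    (Function.surjInv (ZMod.ringHom_surjective (PadicInt.toZMod (p := p))))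
  obtain ⟨u, hu⟩ := PadicInt.isUnit_one_add_pow_smul hm X
  refine ⟨⟨u, mem_iff_exists_eq_one_add_smul.2 ⟨X, hu⟩⟩, ?_⟩
  rw [residue_eq_of_coe_eq hm hu]
  have hX : X.map PadicInt.toZMod = Multiplicative.toAdd Y := by
    ext i k
    simp [X, Function.surjInv_eq]
  rw [hX, ofAdd_toAdd]

noncomputable def quotientEquiv (hm : 0 < m) :
    (congrSubgroup p d m ⧸ (congrSubgroup p d (m + 1)).subgroupOf (congrSubgroup p d m)) ≃*
      Multiplicative (Matrix (Fin d) (Fin d) (ZMod p)) :=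
  (QuotientGroup.quotientMulEquivOfEq (ker_residue hm).symm).trans
    (QuotientGroup.quotientKerEquivOfSurjective _ (residue_surjective hm))

theorem quotientEquiv_mk (hm : 0 < m) (M : congrSubgroup p d m) :
    quotientEquiv hm (QuotientGroup.mk M) = residue hm M :=
  rfl

theorem residue_eq_of_coe_eq_pow (hp : 3 ≤ p) (hm : 0 < m) {A : congrSubgroup p d m}
    {B : congrSubgroup p d (m + 1)}
    (hAB : (B : GL (Fin d) ℤ_[p]) = (A : GL (Fin d) ℤ_[p]) ^ p) :
    residue m.succ_pos B = residue hm A := by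
  obtain ⟨Y, hY⟩ := exists_one_add_pow_smul_pow_prime_eq (S := ℤ_[p]) Fact.out hp hm (offset A)
  rw [residue_eq_of_coe_eq hm (coe_eq_one_add_smul_offset A),
    residue_eq_of_coe_eq _ (by rw [hAB, Units.val_pow_eq_pow_val, coe_eq_one_add_smul_offset, hY])]
  simpa using congrArg Multiplicative.ofAdd
    (PadicInt.map_toZMod_add_pow_smul (k := 1) one_pos (offset A) Y)

end congrSubgroup

/-- For a prime `p ≥ 3` and `m ≥ 1`, the `p`-th power map induces a group
isomorphism `K_m/K_{m+1} ≃ K_{m+1}/K_{m+2}` of quotients of principal congruence subgroups of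
`GL_n(ℤ_p)`; moreover each quotient `K_m/K_{m+1}` is isomorphic, as a group, to the additive
group of `n × n` matrices over `𝔽_p`. -/
theorem pth_power_quotient_iso (p : ℕ) [Fact p.Prime] (hp : 3 ≤ p) (n m : ℕ) (hm : 1 ≤ m) :
    (∃ e : (congrSubgroup p n m ⧸ (congrSubgroup p n (m + 1)).subgroupOf (congrSubgroup p n m)) ≃*
        (congrSubgroup p n (m + 1) ⧸ (congrSubgroup p n (m + 2)).subgroupOf (congrSubgroup p n (m + 1))),
      ∀ (A : congrSubgroup p n m) (B : congrSubgroup p n (m + 1)),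
        (B : GL (Fin n) ℤ_[p]) = (A : GL (Fin n) ℤ_[p]) ^ p →
          e (QuotientGroup.mk A) = QuotientGroup.mk B) ∧
    Nonempty ((congrSubgroup p n m ⧸ (congrSubgroup p n (m + 1)).subgroupOf (congrSubgroup p n m)) ≃*
      Multiplicative (Matrix (Fin n) (Fin n) (ZMod p))) := by
  open congrSubgroup in
  refine ⟨⟨(quotientEquiv hm).trans (quotientEquiv m.succ_pos).symm, fun A B hAB => ?_⟩,
    ⟨quotientEquiv hm⟩⟩
  rw [MulEquiv.trans_apply, MulEquiv.symm_apply_eq, quotientEquiv_mk, quotientEquiv_mk,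
    residue_eq_of_coe_eq_pow hp hm hAB]
end

section
/- Let p ≥ 3 be a prime, n ≥ 1, and let H be a closed subgroup of GL_d(ℤ_p). Suppose H contains, for every j ≥ n, a set of representatives of K_j/K_{j+1} modulo p^(j+1) (i.e. the reduction of H mod p^(j+1) contains the image of K_j). Then H contains the full principal congruence subgroup K_n. -/
open Matrix

/-- Reduction `GL_d(ℤ_p) → GL_d(ℤ/p^k)` induced by `ℤ_p → ℤ/p^k`. -/
noncomputable def glRed (p : ℕ) [Fact p.Prime] (d k : ℕ) : GL (Fin d) ℤ_[p] →* GL (Fin d) (ZMod (p ^ k)) :=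
  Matrix.GeneralLinearGroup.map (PadicInt.toZModPow k)

/-!
Correcting level by level with the representatives supplied at each `j ≥ n`, every `M ∈ K_n`
is approximated by `g_m ∈ H` with `g_m⁻¹ * M ∈ K_{n+m}`. Since the `K_j` shrink to `1` in the
`p`-adic topology, `g_m → M`, and `M ∈ H` because `H` is closed.
-/

open Filter Topology

namespace PadicInt

variable {p : ℕ} [Fact p.Prime]

theorem tendsto_zero_of_eventually_pow_dvd {ι : Type*} {l : Filter ι} {x : ι → ℤ_[p]}
    (hx : ∀ j, ∀ᶠ i in l, (p : ℤ_[p]) ^ j ∣ x i) : Tendsto x l (𝓝 0) := by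
  rw [Metric.tendsto_nhds]
  intro ε hε
  have hp : (1 : ℝ) < p := mod_cast (Fact.out : p.Prime).one_lt
  obtain ⟨j, hj⟩ := exists_pow_lt_of_lt_one hε (inv_lt_one_of_one_lt₀ hp)
  filter_upwards [hx j] with i hi
  have hnorm : ‖x i‖ ≤ (p : ℝ) ^ (-(j : ℤ)) :=
    (norm_le_pow_iff_mem_span_pow _ _).2 (Ideal.mem_span_singleton.2 hi)
  rw [_root_.zpow_neg, zpow_natCast, ← inv_pow] at hnorm
  rw [dist_zero_right]
  exact hnorm.trans_lt hj

end PadicInt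

section congrSubgroup

variable {p : ℕ} [Fact p.Prime] {d : ℕ}

theorem congrSubgroup_antitone : Antitone (congrSubgroup p d) :=
  fun _ _ hij _ hM a b => (pow_dvd_pow _ hij).trans (hM a b)

theorem ker_glRed (k : ℕ) : (glRed p d k).ker = congrSubgroup p d k := by
  ext M
  simp only [MonoidHom.mem_ker, Units.ext_iff, ← Matrix.ext_iff, glRed,
    Matrix.GeneralLinearGroup.map_apply]
  change _ ↔ ∀ i j, _
  refine forall₂_congr fun i j => ?_
  rw [← Ideal.mem_span_singleton, ← PadicInt.ker_toZModPow, RingHom.mem_ker, Matrix.sub_apply,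
    map_sub, sub_eq_zero, Units.val_one, Matrix.one_apply, Matrix.one_apply,
    apply_ite (PadicInt.toZModPow k), map_one, map_zero]

theorem tendsto_val_of_eventually_mem_congrSubgroup {ι : Type*} {l : Filter ι}
    {x : ι → GL (Fin d) ℤ_[p]} (hx : ∀ j, ∀ᶠ i in l, x i ∈ congrSubgroup p d j) :
    Tendsto (fun i => (x i : Matrix (Fin d) (Fin d) ℤ_[p])) l (𝓝 1) := by
  rw [← tendsto_sub_nhds_zero_iff]
  exact tendsto_pi_nhds.2 fun a => tendsto_pi_nhds.2 fun b =>
    PadicInt.tendsto_zero_of_eventually_pow_dvd fun j => (hx j).mono fun i hi => hi a b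

theorem tendsto_one_of_eventually_mem_congrSubgroup {ι : Type*} {l : Filter ι}
    {x : ι → GL (Fin d) ℤ_[p]} (hx : ∀ j, ∀ᶠ i in l, x i ∈ congrSubgroup p d j) :
    Tendsto x l (𝓝 1) := by
  rw [Units.isEmbedding_embedProduct.tendsto_nhds_iff]
  simp only [Function.comp_def, Units.embedProduct_apply, map_one]
  exact (tendsto_val_of_eventually_mem_congrSubgroup hx).prodMk_nhds
    ((MulOpposite.continuous_op.tendsto _).comp
      (tendsto_val_of_eventually_mem_congrSubgroup fun j => (hx j).mono fun _ hi => inv_mem hi))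

theorem exists_inv_mul_mem_congrSubgroup {n : ℕ} {H : Subgroup (GL (Fin d) ℤ_[p])}
    (hrep : ∀ j, n ≤ j →
      Subgroup.map (glRed p d (j + 1)) (congrSubgroup p d j) ≤
        Subgroup.map (glRed p d (j + 1)) H)
    {M : GL (Fin d) ℤ_[p]} (hM : M ∈ congrSubgroup p d n) (m : ℕ) :
    ∃ g ∈ H, g⁻¹ * M ∈ congrSubgroup p d (n + m) := by
  induction m with
  | zero => exact ⟨1, one_mem H, by simpa using hM⟩
  | succ m ih =>
    obtain ⟨g, hgH, hg⟩ := ih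
    obtain ⟨h, hhH, hred⟩ := hrep (n + m) (Nat.le_add_right n m) ⟨_, hg, rfl⟩
    refine ⟨g * h, mul_mem hgH hhH, ?_⟩
    rw [_root_.mul_inv_rev, mul_assoc, ← ker_glRed]
    exact (MonoidHom.eq_iff _).1 hred.symm

end congrSubgroup

theorem closed_subgroup_contains_congruence_general (p d n : ℕ) [Fact p.Prime]
    (H : Subgroup (GL (Fin d) ℤ_[p]))
    (hclosed : IsClosed (H : Set (GL (Fin d) ℤ_[p])))
    (hrep : ∀ j, n ≤ j →
      Subgroup.map (glRed p d (j + 1)) (congrSubgroup p d j) ≤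
        Subgroup.map (glRed p d (j + 1)) H) :
    congrSubgroup p d n ≤ H := by
  intro M hM
  choose g hgH hg using exists_inv_mul_mem_congrSubgroup hrep hM
  have hsmall : Tendsto (fun m => (g m)⁻¹ * M) atTop (𝓝 1) :=
    tendsto_one_of_eventually_mem_congrSubgroup fun j =>
      (eventually_ge_atTop j).mono fun m hm => congrSubgroup_antitone (by omega) (hg m)
  have hlim : Tendsto g atTop (𝓝 M) := by
    simpa using tendsto_const_nhds (x := M).mul hsmall.inv
  exact hclosed.mem_of_tendsto hlim (Eventually.of_forall hgH)

/-- Let `p ≥ 3` be prime, `n ≥ 1`, and `H` a closed subgroup of `GL_d(ℤ_p)`.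
If, for every `j ≥ n`, the reduction of `H` mod `p^(j+1)` contains the image of the principal
congruence subgroup `K_j`, then `H` contains `K_n`. -/
theorem closed_subgroup_contains_congruence (p d n : ℕ) [Fact p.Prime] (hp : 3 ≤ p)
    (hn : 1 ≤ n) (H : Subgroup (GL (Fin d) ℤ_[p]))
    (hclosed : IsClosed (H : Set (GL (Fin d) ℤ_[p])))
    (hrep : ∀ j, n ≤ j →
      Subgroup.map (glRed p d (j + 1)) (congrSubgroup p d j) ≤
        Subgroup.map (glRed p d (j + 1)) H) :
    congrSubgroup p d n ≤ H :=
  closed_subgroup_contains_congruence_general p d n H hclosed hrep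
end

section
/- Let p ≥ 3 and let G and G' be closed subgroups of GL_d(ℤ_p). Suppose G contains the principal congruence subgroup K_n for some n ≥ 1, and suppose the images of G and G' in GL_d(ℤ/p^(n+1)ℤ) coincide. Then G' contains K_m for some m ≥ n. -/
open Matrix

namespace ImgAgree

variable {p : ℕ} [Fact p.Prime] {d : ℕ}

/-- Abbreviation for the matrix ring. -/
abbrev Mat (p d : ℕ) [Fact p.Prime] := Matrix (Fin d) (Fin d) ℤ_[p]

/-- Entrywise divisibility by `p^j`, phrased via scalar multiplication. -/
def CD (p : ℕ) [Fact p.Prime] {d : ℕ} (j : ℕ) (B : Mat p d) : Prop :=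
  ∃ C, B = ((p : ℤ_[p]) ^ j) • C

lemma CD_iff {j : ℕ} {B : Mat p d} :
    CD p j B ↔ ∀ i k, (p : ℤ_[p]) ^ j ∣ B i k := by
  constructor
  · rintro ⟨C, rfl⟩ i k
    exact ⟨C i k, by simp [Matrix.smul_apply]⟩
  · intro h
    refine ⟨fun i k => (h i k).choose, ?_⟩
    ext i k
    exact (h i k).choose_spec

lemma CD.add {j : ℕ} {B C : Mat p d} (hB : CD p j B) (hC : CD p j C) :
    CD p j (B + C) := by
  obtain ⟨B', rfl⟩ := hB; obtain ⟨C', rfl⟩ := hC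
  exact ⟨B' + C', by rw [smul_add]⟩

lemma CD.mul_right {j : ℕ} {B : Mat p d} (hB : CD p j B) (C : Mat p d) :
    CD p j (B * C) := by
  obtain ⟨B', rfl⟩ := hB
  exact ⟨B' * C, by rw [smul_mul_assoc]⟩

lemma CD.mul_left {j : ℕ} {B : Mat p d} (hB : CD p j B) (C : Mat p d) :
    CD p j (C * B) := by
  obtain ⟨B', rfl⟩ := hB
  exact ⟨C * B', by rw [mul_smul_comm]⟩

lemma CD.mul {j j' : ℕ} {B C : Mat p d} (hB : CD p j B) (hC : CD p j' C) :
    CD p (j + j') (B * C) := by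
  obtain ⟨B', rfl⟩ := hB; obtain ⟨C', rfl⟩ := hC
  exact ⟨B' * C', by rw [smul_mul_assoc, mul_smul_comm, smul_smul, pow_add]⟩

lemma CD.smul' {j : ℕ} {B : Mat p d} (hB : CD p j B) (c : ℤ_[p]) :
    CD p j (c • B) := by
  obtain ⟨B', rfl⟩ := hB
  exact ⟨c • B', smul_comm _ _ _⟩

lemma CD.psmul {j i : ℕ} {B : Mat p d} (hB : CD p j B) :
    CD p (i + j) (((p : ℤ_[p]) ^ i) • B) := by
  obtain ⟨B', rfl⟩ := hB
  exact ⟨B', by rw [smul_smul, ← pow_add]⟩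

lemma CD.mono {j j' : ℕ} {B : Mat p d} (h : j ≤ j') (hB : CD p j' B) :
    CD p j B := by
  obtain ⟨B', rfl⟩ := hB
  exact ⟨(p : ℤ_[p]) ^ (j' - j) • B', by rw [smul_smul, ← pow_add, Nat.add_sub_cancel' h]⟩

lemma CD_natCast {j N : ℕ} (h : p ^ j ∣ N) : CD p j ((N : Mat p d)) := by
  obtain ⟨t, rfl⟩ := h
  refine ⟨(t : Mat p d), ?_⟩
  rw [Nat.cast_mul, ← nsmul_eq_mul, ← Nat.cast_smul_eq_nsmul (ℤ_[p]), Nat.cast_pow]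

lemma mem_congr_iff {j : ℕ} {M : GL (Fin d) ℤ_[p]} :
    M ∈ congrSubgroup p d j ↔ CD p j ((M : Mat p d) - 1) := by
  rw [CD_iff]
  exact Iff.rfl

lemma mem_div_iff {j : ℕ} {x y : GL (Fin d) ℤ_[p]} :
    y * x⁻¹ ∈ congrSubgroup p d j ↔ CD p j ((y : Mat p d) - (x : Mat p d)) := by
  rw [mem_congr_iff]
  have e1 : ((y * x⁻¹ : GL (Fin d) ℤ_[p]) : Mat p d) * (x : Mat p d) = (y : Mat p d) := by
    rw [← Units.val_mul, inv_mul_cancel_right]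
  constructor
  · intro h
    have : (y : Mat p d) - (x : Mat p d)
        = (((y * x⁻¹ : GL (Fin d) ℤ_[p]) : Mat p d) - 1) * (x : Mat p d) := by
      rw [sub_mul, one_mul, e1]
    rw [this]
    exact h.mul_right _
  · intro h
    have : ((y * x⁻¹ : GL (Fin d) ℤ_[p]) : Mat p d) - 1
        = ((y : Mat p d) - (x : Mat p d)) * ((x⁻¹ : GL (Fin d) ℤ_[p]) : Mat p d) := by
      rw [sub_mul, ← Units.val_mul, Units.mul_inv]
    rw [this]
    exact h.mul_right _

lemma CD.pow_sub_one {k m : ℕ} {B : Mat p d} (h : CD p k (B - 1)) : CD p k (B ^ m - 1) := by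
  induction m with
  | zero => exact ⟨0, by simp⟩
  | succ m ih =>
      have e : B ^ (m + 1) - 1 = B ^ m * (B - 1) + (B ^ m - 1) := by
        rw [pow_succ]; noncomm_ring
      rw [e]
      exact (h.mul_left _).add ih

lemma ring_id (u w Q : Mat p d) (m : ℕ) :
    u ^ (m + 1) - w ^ (m + 1) - (Q + (u - w)) =
      u * (u ^ m - w ^ m - Q) + (u - 1) * Q + ((u - w) * w ^ m - (u - w)) := by
  rw [pow_succ' u, pow_succ' w]; noncomm_ring

/-- Key congruence: if `u ≡ w mod p^(k+1)` and both lie in `1 + p^k M`, then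
`u^m ≡ w^m + m (u - w) mod p^(2k+1)`. -/
lemma pow_congr {k : ℕ} {u w : Mat p d}
    (hu : CD p k (u - 1)) (hw : CD p k (w - 1)) (hE : CD p (k + 1) (u - w)) (m : ℕ) :
    CD p (2 * k + 1) (u ^ m - w ^ m - (m : ℤ_[p]) • (u - w)) := by
  induction m with
  | zero => exact ⟨0, by simp⟩
  | succ m ih =>
      have e : u ^ (m + 1) - w ^ (m + 1) - ((m + 1 : ℕ) : ℤ_[p]) • (u - w) =
          u * (u ^ m - w ^ m - (m : ℤ_[p]) • (u - w)) + (u - 1) * ((m : ℤ_[p]) • (u - w))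
            + ((u - w) * w ^ m - (u - w)) := by
        have : ((m + 1 : ℕ) : ℤ_[p]) • (u - w) = (m : ℤ_[p]) • (u - w) + (u - w) := by
          push_cast
          rw [add_smul, one_smul]
        rw [this]
        exact ring_id u w _ m
      rw [e]
      have h1 : CD p (2 * k + 1) (u * (u ^ m - w ^ m - (m : ℤ_[p]) • (u - w))) :=
        ih.mul_left _
      have h2 : CD p (2 * k + 1) ((u - 1) * ((m : ℤ_[p]) • (u - w))) := by
        have := hu.mul (hE.smul' (m : ℤ_[p]))
        rwa [show k + (k + 1) = 2 * k + 1 by ring] at this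
      have h3 : CD p (2 * k + 1) ((u - w) * w ^ m - (u - w)) := by
        have e2 : (u - w) * w ^ m - (u - w) = (u - w) * (w ^ m - 1) := by noncomm_ring
        rw [e2]
        have := hE.mul (hw.pow_sub_one (m := m))
        rwa [show k + 1 + k = 2 * k + 1 by ring] at this
      exact (h1.add h2).add h3

/-- Binomial congruence: `(1 + p^k A)^p ≡ 1 + p^(k+1) A mod p^(k+2)` for `p ≥ 3`, `k ≥ 1`. -/
lemma one_add_pow (hp3 : 3 ≤ p) {k : ℕ} (hk : 1 ≤ k) (A : Mat p d) :
    CD p (k + 2) ((1 + (p : ℤ_[p]) ^ k • A) ^ p - (1 + (p : ℤ_[p]) ^ (k + 1) • A)) := by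
  set B : Mat p d := (p : ℤ_[p]) ^ k • A with hB
  have hcomm : Commute B (1 : Mat p d) := Commute.one_right B
  have hbin : (1 + B) ^ p = ∑ i ∈ Finset.range (p + 1), B ^ i * ((p.choose i : ℕ) : Mat p d) := by
    rw [add_comm, hcomm.add_pow]
    refine Finset.sum_congr rfl fun i _ => by rw [one_pow, mul_one]
  obtain ⟨m, hm⟩ : ∃ m, p = m + 3 := ⟨p - 3, by omega⟩
  have hsum : ∑ i ∈ Finset.range (p + 1), B ^ i * ((p.choose i : ℕ) : Mat p d)
      = (∑ i ∈ Finset.range (m + 2), B ^ (i + 2) * ((p.choose (i + 2) : ℕ) : Mat p d))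
        + B * ((p.choose 1 : ℕ) : Mat p d) + ((p.choose 0 : ℕ) : Mat p d) := by
    rw [show p + 1 = (m + 2) + 1 + 1 by omega, Finset.sum_range_succ', Finset.sum_range_succ']
    norm_num
  have hc1 : B * ((p.choose 1 : ℕ) : Mat p d) = (p : ℤ_[p]) ^ (k + 1) • A := by
    rw [Nat.choose_one_right]
    rw [(Nat.cast_commute (p : ℕ) B).symm.eq, ← nsmul_eq_mul, ← Nat.cast_smul_eq_nsmul (ℤ_[p]),
      hB, smul_smul, pow_succ, mul_comm]
  have hc0 : ((p.choose 0 : ℕ) : Mat p d) = 1 := by simp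
  have key : (1 + B) ^ p - (1 + (p : ℤ_[p]) ^ (k + 1) • A)
      = ∑ i ∈ Finset.range (m + 2), B ^ (i + 2) * ((p.choose (i + 2) : ℕ) : Mat p d) := by
    rw [hbin, hsum, hc1, hc0]
    abel
  rw [key]
  -- each term is divisible by p^(k+2)
  have hterm : ∀ i ∈ Finset.range (m + 2),
      CD p (k + 2) (B ^ (i + 2) * ((p.choose (i + 2) : ℕ) : Mat p d)) := by
    intro i hi
    have hi' : i + 2 ≤ p := by
      simp only [Finset.mem_range] at hi
      omega
    have hBpow : CD p (k * (i + 2)) (B ^ (i + 2)) := by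
      refine ⟨A ^ (i + 2), ?_⟩
      rw [hB, smul_pow, ← pow_mul]
    rcases eq_or_lt_of_le hi' with heq | hlt
    · -- i + 2 = p : use p^(k(i+2)) = p^(kp), kp ≥ k + 2
      have hkp : k + 2 ≤ k * (i + 2) := by
        rw [heq]
        calc k + 2 ≤ k + 2 * k := by omega
        _ = k * 3 := by ring
        _ ≤ k * p := Nat.mul_le_mul_left k hp3
      exact ((hBpow.mono hkp)).mul_right _
    · -- i + 2 < p : p divides the binomial coefficient
      have hdvd : p ∣ p.choose (i + 2) :=
        Nat.Prime.dvd_choose_self (Fact.out) (by omega) hlt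
      have hchoose : CD p 1 ((p.choose (i + 2) : ℕ) : Mat p d) :=
        CD_natCast (by simpa using hdvd)
      have h2k : CD p (2 * k) (B ^ (i + 2)) := by
        refine hBpow.mono ?_
        calc 2 * k = k * 2 := by ring
        _ ≤ k * (i + 2) := Nat.mul_le_mul_left k (by omega)
      have := h2k.mul hchoose
      exact this.mono (by omega)
  -- sum of CD terms is CD
  classical
  refine Finset.sum_induction _ (CD p (k + 2)) (fun a b ha hb => ha.add hb) ⟨0, by simp⟩ hterm

/-- A matrix congruent to `1 mod p` is invertible over `ℤ_[p]`. -/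
lemma isUnit_one_add {B : Mat p d} (hB : CD p 1 B) : IsUnit (1 + B) := by
  rw [Matrix.isUnit_iff_isUnit_det]
  have hp0 : (PadicInt.toZMod ((p : ℤ_[p]) : ℤ_[p])) = 0 := by
    rw [map_natCast, ZMod.natCast_self]
  have hmap : (1 + B).map (PadicInt.toZMod : ℤ_[p] →+* ZMod p) = 1 := by
    obtain ⟨C, rfl⟩ := hB
    ext i j
    have e : ((1 : Mat p d) + (p : ℤ_[p]) ^ 1 • C) i j
        = (1 : Mat p d) i j + (p : ℤ_[p]) * C i j := by
      simp [Matrix.add_apply, Matrix.smul_apply]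
    rw [Matrix.map_apply, e, map_add, _root_.map_mul, hp0, zero_mul, add_zero]
    simp [Matrix.one_apply, apply_ite (PadicInt.toZMod : ℤ_[p] → ZMod p)]
  have hdet : PadicInt.toZMod ((1 + B).det) = 1 := by
    rw [RingHom.map_det, RingHom.mapMatrix_apply, hmap, Matrix.det_one]
  rw [PadicInt.isUnit_iff]
  by_contra hne
  have hlt : ‖(1 + B).det‖ < 1 :=
    lt_of_le_of_ne (PadicInt.norm_le_one _) hne
  have : (p : ℤ_[p]) ∣ (1 + B).det := (PadicInt.norm_lt_one_iff_dvd _).mp hlt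
  have h1 : (p : ℤ_[p]) ∣ ((1 + B).det - 1) := by
    have : (1 + B).det - 1 ∈ RingHom.ker (PadicInt.toZMod : ℤ_[p] →+* ZMod p) := by
      rw [RingHom.mem_ker, map_sub, hdet, _root_.map_one, sub_self]
    rwa [PadicInt.ker_toZMod, PadicInt.maximalIdeal_eq_span_p,
      Ideal.mem_span_singleton] at this
  have hone : (p : ℤ_[p]) ∣ 1 := by
    have := dvd_sub this h1
    simpa using this
  have hinv : ((p : ℝ))⁻¹ = 1 := by
    rw [← PadicInt.norm_p (p := p)]
    exact PadicInt.isUnit_iff.mp (isUnit_of_dvd_one hone)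
  have hp1 : (1 : ℝ) < p := by exact_mod_cast (Fact.out : p.Prime).one_lt
  have : (p : ℝ) = 1 := inv_eq_one.mp hinv
  linarith

/-- The inductive `p`-th power step. -/
lemma step (hp3 : 3 ≤ p) {k : ℕ} (hk : 1 ≤ k) {x u w : GL (Fin d) ℤ_[p]} {A : Mat p d}
    (hx : (x : Mat p d) = 1 + (p : ℤ_[p]) ^ (k + 1) • A)
    (hw : (w : Mat p d) = 1 + (p : ℤ_[p]) ^ k • A)
    (hu : u * w⁻¹ ∈ congrSubgroup p d (k + 1)) :
    u ^ p * x⁻¹ ∈ congrSubgroup p d (k + 2) := by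
  rw [mem_div_iff] at hu ⊢
  have hwm : CD p k ((w : Mat p d) - 1) := ⟨A, by rw [hw]; abel⟩
  have hum : CD p k ((u : Mat p d) - 1) := by
    have : (u : Mat p d) - 1 = ((u : Mat p d) - (w : Mat p d)) + ((w : Mat p d) - 1) := by abel
    rw [this]
    exact (hu.mono (by omega)).add hwm
  have hpc := pow_congr hum hwm hu p
  have hval : ((u ^ p : GL (Fin d) ℤ_[p]) : Mat p d) = ((u : Mat p d)) ^ p :=
    Units.val_pow_eq_pow_val u p
  have hdecomp : ((u ^ p : GL (Fin d) ℤ_[p]) : Mat p d) - (x : Mat p d)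
      = ((u : Mat p d) ^ p - (w : Mat p d) ^ p - (p : ℤ_[p]) • ((u : Mat p d) - (w : Mat p d)))
        + (p : ℤ_[p]) • ((u : Mat p d) - (w : Mat p d))
        + ((w : Mat p d) ^ p - (1 + (p : ℤ_[p]) ^ (k + 1) • A)) := by
    rw [hval, hx]
    abel
  rw [hdecomp]
  have h1 : CD p (k + 2) ((u : Mat p d) ^ p - (w : Mat p d) ^ p
      - (p : ℤ_[p]) • ((u : Mat p d) - (w : Mat p d))) := by
    have hcast : ((p : ℕ) : ℤ_[p]) = (p : ℤ_[p]) := rfl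
    rw [← hcast]
    exact hpc.mono (by omega)
  have h2 : CD p (k + 2) ((p : ℤ_[p]) • ((u : Mat p d) - (w : Mat p d))) := by
    obtain ⟨E, hE⟩ := hu
    refine ⟨E, ?_⟩
    rw [hE, smul_smul]
    congr 1
    ring
  have h3 : CD p (k + 2) ((w : Mat p d) ^ p - (1 + (p : ℤ_[p]) ^ (k + 1) • A)) := by
    rw [hw]
    exact one_add_pow hp3 hk A
  exact (h1.add h2).add h3

/-- Equality of reductions mod `p^k` gives entrywise congruence. -/
lemma glRed_eq {k : ℕ} {x y : GL (Fin d) ℤ_[p]}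
    (h : glRed p d k y = glRed p d k x) : CD p k ((y : Mat p d) - (x : Mat p d)) := by
  rw [CD_iff]
  intro i l
  have hv : ((y : Mat p d)).map (PadicInt.toZModPow k)
      = ((x : Mat p d)).map (PadicInt.toZModPow k) := by
    have := congrArg Units.val h
    simpa [glRed, Matrix.GeneralLinearGroup.map, RingHom.mapMatrix_apply] using this
  have he : PadicInt.toZModPow k ((y : Mat p d) i l)
      = PadicInt.toZModPow k ((x : Mat p d) i l) := by
    have := congrFun (congrFun hv i) l
    simpa [Matrix.map_apply] using this
  have hker : (y : Mat p d) i l - (x : Mat p d) i l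
      ∈ RingHom.ker (PadicInt.toZModPow k : ℤ_[p] →+* ZMod (p ^ k)) := by
    rw [RingHom.mem_ker, map_sub, he, sub_self]
  rw [PadicInt.ker_toZModPow, Ideal.mem_span_singleton] at hker
  simpa [Matrix.sub_apply] using hker

lemma base {n : ℕ} {G G' : Subgroup (GL (Fin d) ℤ_[p])}
    (hKG : congrSubgroup p d n ≤ G)
    (himg : Subgroup.map (glRed p d (n + 1)) G = Subgroup.map (glRed p d (n + 1)) G')
    {x : GL (Fin d) ℤ_[p]} (hx : x ∈ congrSubgroup p d n) :
    ∃ y ∈ G', y * x⁻¹ ∈ congrSubgroup p d (n + 1) := by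
  have hmem : glRed p d (n + 1) x ∈ Subgroup.map (glRed p d (n + 1)) G' := by
    rw [← himg]; exact ⟨x, hKG hx, rfl⟩
  obtain ⟨y, hyG', hyx⟩ := hmem
  exact ⟨y, hyG', mem_div_iff.mpr (glRed_eq hyx)⟩

lemma main_claim (hp3 : 3 ≤ p) {n : ℕ} (hn : 1 ≤ n) {G G' : Subgroup (GL (Fin d) ℤ_[p])}
    (hKG : congrSubgroup p d n ≤ G)
    (himg : Subgroup.map (glRed p d (n + 1)) G = Subgroup.map (glRed p d (n + 1)) G') :
    ∀ j, ∀ x ∈ congrSubgroup p d (n + j),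
      ∃ y ∈ G', y * x⁻¹ ∈ congrSubgroup p d (n + j + 1) := by
  intro j
  induction j with
  | zero => intro x hx; exact base hKG himg hx
  | succ j ih =>
      intro x hx
      obtain ⟨A, hA⟩ := mem_congr_iff.mp hx
      have hxval : (x : Mat p d) = 1 + (p : ℤ_[p]) ^ (n + j + 1) • A := by
        rw [show ((p : ℤ_[p]) ^ (n + j + 1) • A) = ((x : Mat p d) - 1) from hA.symm]
        abel
      have hwu : IsUnit ((1 : Mat p d) + (p : ℤ_[p]) ^ (n + j) • A) := by
        apply isUnit_one_add
        have hcd : CD p (n + j) (((p : ℤ_[p]) ^ (n + j)) • A) := ⟨A, rfl⟩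
        exact hcd.mono (by omega)
      have hwval : ((hwu.unit : GL (Fin d) ℤ_[p]) : Mat p d)
          = 1 + (p : ℤ_[p]) ^ (n + j) • A := hwu.unit_spec
      have hwK : hwu.unit ∈ congrSubgroup p d (n + j) :=
        mem_congr_iff.mpr ⟨A, by rw [hwval]; abel⟩
      obtain ⟨u, huG', huw⟩ := ih hwu.unit hwK
      exact ⟨u ^ p, pow_mem huG' p,
        step hp3 (show 1 ≤ n + j by omega) hxval hwval huw⟩

lemma approx (hp3 : 3 ≤ p) {n : ℕ} (hn : 1 ≤ n) {G G' : Subgroup (GL (Fin d) ℤ_[p])}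
    (hKG : congrSubgroup p d n ≤ G)
    (himg : Subgroup.map (glRed p d (n + 1)) G = Subgroup.map (glRed p d (n + 1)) G')
    {x : GL (Fin d) ℤ_[p]} (hx : x ∈ congrSubgroup p d n) :
    ∀ j, ∃ y ∈ G', y * x⁻¹ ∈ congrSubgroup p d (n + j + 1) := by
  intro j
  induction j with
  | zero => exact main_claim hp3 hn hKG himg 0 x hx
  | succ j ih =>
      obtain ⟨y, hyG', hyx⟩ := ih
      have hx' : x * y⁻¹ ∈ congrSubgroup p d (n + (j + 1)) := by
        have := inv_mem hyx
        rwa [_root_.mul_inv_rev, inv_inv] at this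
      obtain ⟨y', hy'G', hy'x⟩ := main_claim hp3 hn hKG himg (j + 1) (x * y⁻¹) hx'
      refine ⟨y' * y, mul_mem hy'G' hyG', ?_⟩
      have e : (x * y⁻¹)⁻¹ = y * x⁻¹ := by rw [_root_.mul_inv_rev, inv_inv]
      rwa [e, ← mul_assoc] at hy'x

/-- Entrywise `p`-adic smallness gives convergence of matrices. -/
lemma tendsto_of_cd {Z : ℕ → GL (Fin d) ℤ_[p]} {L : GL (Fin d) ℤ_[p]}
    (h : ∀ j, CD p j ((Z j : Mat p d) - (L : Mat p d))) :
    Filter.Tendsto (fun j => (Z j : Mat p d)) Filter.atTop (nhds (L : Mat p d)) := by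
  have hp1 : (1 : ℝ) < p := by exact_mod_cast (Fact.out : p.Prime).one_lt
  have hinv0 : (0 : ℝ) ≤ ((p : ℝ))⁻¹ := by positivity
  have hinv1 : ((p : ℝ))⁻¹ < 1 := by
    rw [inv_lt_one_iff₀]; right; exact hp1
  have key : ∀ (i k : Fin d),
      Filter.Tendsto (fun j => (Z j : Mat p d) i k) Filter.atTop
        (nhds ((L : Mat p d) i k)) := by
    intro i k
    rw [tendsto_iff_norm_sub_tendsto_zero]
    refine squeeze_zero (fun j => norm_nonneg _) (g := fun j => ((p : ℝ))⁻¹ ^ j) ?_ ?_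
    · intro j
      obtain ⟨c, hc⟩ := (CD_iff.mp (h j)) i k
      have e : (Z j : Mat p d) i k - (L : Mat p d) i k = (p : ℤ_[p]) ^ j * c := by
        rw [← hc]; simp [Matrix.sub_apply]
      rw [e, norm_mul, norm_pow, PadicInt.norm_p]
      calc ((p : ℝ))⁻¹ ^ j * ‖c‖ ≤ ((p : ℝ))⁻¹ ^ j * 1 := by
            gcongr
            exact PadicInt.norm_le_one c
        _ = ((p : ℝ))⁻¹ ^ j := mul_one _
    · exact tendsto_pow_atTop_nhds_zero_of_lt_one hinv0 hinv1
  exact tendsto_pi_nhds.mpr fun i => tendsto_pi_nhds.mpr fun k => key i k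

end ImgAgree

/-- Let `p ≥ 3` and let `G` and `G'` be closed subgroups of `GL_d(ℤ_p)`.
If `G` contains the principal congruence subgroup `K_n` for some `n ≥ 1` and the images of
`G` and `G'` in `GL_d(ℤ/p^(n+1)ℤ)` coincide, then `G'` contains `K_m` for some `m ≥ n`. -/
theorem image_agreement_propagates_openness (p d n : ℕ) [Fact p.Prime] (hp : 3 ≤ p)
    (hn : 1 ≤ n) (G G' : Subgroup (GL (Fin d) ℤ_[p]))
    (hGclosed : IsClosed (G : Set (GL (Fin d) ℤ_[p])))
    (hG'closed : IsClosed (G' : Set (GL (Fin d) ℤ_[p])))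
    (hKG : congrSubgroup p d n ≤ G)
    (himg : Subgroup.map (glRed p d (n + 1)) G = Subgroup.map (glRed p d (n + 1)) G') :
    ∃ m, n ≤ m ∧ congrSubgroup p d m ≤ G' := by
  refine ⟨n, le_refl n, ?_⟩
  intro x hx
  choose y hyG' hyx using ImgAgree.approx hp hn hKG himg hx
  have hcd1 : ∀ j, ImgAgree.CD p j
      ((y j : ImgAgree.Mat p d) - (x : ImgAgree.Mat p d)) := fun j =>
    (ImgAgree.mem_div_iff.mp (hyx j)).mono (by omega)
  have hcd2 : ∀ j, ImgAgree.CD p j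
      ((((y j)⁻¹ : GL (Fin d) ℤ_[p]) : ImgAgree.Mat p d)
        - ((x⁻¹ : GL (Fin d) ℤ_[p]) : ImgAgree.Mat p d)) := by
    intro j
    have hmem : (y j)⁻¹ * (y j * x⁻¹)⁻¹ * ((y j)⁻¹)⁻¹ ∈ congrSubgroup p d (n + j + 1) :=
      (congrSubgroup_normal p d (n + j + 1)).conj_mem _ (inv_mem (hyx j)) ((y j)⁻¹)
    have e : (y j)⁻¹ * (y j * x⁻¹)⁻¹ * ((y j)⁻¹)⁻¹ = (y j)⁻¹ * (x⁻¹)⁻¹ := by group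
    rw [e] at hmem
    exact (ImgAgree.mem_div_iff.mp hmem).mono (by omega)
  have htend : Filter.Tendsto y Filter.atTop (nhds x) := by
    rw [Units.isEmbedding_embedProduct.tendsto_nhds_iff]
    refine Filter.Tendsto.prodMk_nhds ?_ ?_
    · exact ImgAgree.tendsto_of_cd hcd1
    · exact (MulOpposite.continuous_op.tendsto _).comp (ImgAgree.tendsto_of_cd hcd2)
  have hx' : x ∈ closure (G' : Set (GL (Fin d) ℤ_[p])) :=
    mem_closure_of_tendsto htend (Filter.Eventually.of_forall hyG')
  rwa [hG'closed.closure_eq] at hx'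
end

section
/- For a prime p ≥ 3, if a closed subgroup H of GL_d(ℤ_p) surjects onto GL_d(ℤ/p^2 ℤ) under reduction mod p^2, then H = GL_d(ℤ_p). -/
open Matrix

namespace ModPSq

variable {p : ℕ} [Fact p.Prime] {d : ℕ}

local notation "Mat" => Matrix (Fin d) (Fin d) ℤ_[p]

lemma entry_dvd_mul {a b : ℤ_[p]} {M N : Mat} (hM : ∀ i j, a ∣ M i j) (hN : ∀ i j, b ∣ N i j) :
    ∀ i j, a * b ∣ (M * N) i j := by
  intro i j
  rw [Matrix.mul_apply]
  exact Finset.dvd_sum fun l _ => mul_dvd_mul (hM i l) (hN l j)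

lemma entry_dvd_mul_right {a : ℤ_[p]} {M : Mat} (N : Mat) (hM : ∀ i j, a ∣ M i j) :
    ∀ i j, a ∣ (M * N) i j := by
  intro i j
  rw [Matrix.mul_apply]
  exact Finset.dvd_sum fun l _ => (hM i l).mul_right _

lemma entry_dvd_mul_left {a : ℤ_[p]} {N : Mat} (M : Mat) (hN : ∀ i j, a ∣ N i j) :
    ∀ i j, a ∣ (M * N) i j := by
  intro i j
  rw [Matrix.mul_apply]
  exact Finset.dvd_sum fun l _ => (hN l j).mul_left _

lemma entry_dvd_pow {a : ℤ_[p]} {M : Mat} (hM : ∀ i j, a ∣ M i j) :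
    ∀ m : ℕ, ∀ i j, a ^ m ∣ (M ^ m) i j := by
  intro m
  induction m with
  | zero => intro i j; simp
  | succ n ih =>
    rw [pow_succ, pow_succ]
    exact entry_dvd_mul ih hM

lemma entry_dvd_symm {c : ℤ_[p]} {M N : Mat} (h : ∀ i j, c ∣ (M - N) i j) :
    ∀ i j, c ∣ (N - M) i j := by
  intro i j
  have h2 : c ∣ -((M - N) i j) := (dvd_neg).mpr (h i j)
  rw [Matrix.sub_apply, neg_sub, ← Matrix.sub_apply] at h2
  exact h2

/-- The key binomial step:  if `X ≡ 1 + p^j A (mod p^(j+1))` with `j ≥ 1`, then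
`X^p ≡ 1 + p^(j+1) A (mod p^(j+2))`, for `p ≥ 3`. -/
lemma pow_p_step (hp3 : 3 ≤ p) {X A : Mat} {j : ℕ} (hj : 1 ≤ j)
    (h : ∀ i i', (p : ℤ_[p]) ^ (j+1) ∣ (X - 1 - (p : ℤ_[p]) ^ j • A) i i') :
    ∀ i i', (p : ℤ_[p]) ^ (j+2) ∣ (X ^ p - 1 - (p : ℤ_[p]) ^ (j+1) • A) i i' := by
  set b : Mat := X - 1 with hb
  have hbdvd : ∀ i i', (p : ℤ_[p]) ^ j ∣ b i i' := by
    intro i i'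
    have heq : b i i' = (X - 1 - (p : ℤ_[p]) ^ j • A) i i' + (p : ℤ_[p]) ^ j * A i i' := by
      simp [hb]
    rw [heq]
    exact dvd_add (dvd_trans (pow_dvd_pow _ (by omega)) (h i i')) (dvd_mul_right _ _)
  obtain ⟨q, hq⟩ : ∃ q, p = q + 2 := ⟨p - 2, by omega⟩
  have hcomm : Commute b (1 : Mat) := Commute.one_right _
  have hX : X ^ p = ∑ m ∈ Finset.range (p + 1), b ^ m * (p.choose m : Mat) := by
    have hXb : X = b + 1 := by simp [hb]
    rw [hXb, hcomm.add_pow]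
    congr 1; ext m; rw [one_pow, mul_one]
  have hsplit : X ^ p = (∑ m ∈ Finset.range (q + 1), b ^ (m + 2) * ((p.choose (m + 2) : ℕ) : Mat))
      + b * (p : Mat) + 1 := by
    rw [hX, show p + 1 = (q + 1) + 1 + 1 by omega]
    rw [Finset.sum_range_succ' _ ((q+1)+1), Finset.sum_range_succ' _ (q+1)]
    simp only [pow_zero, one_mul, pow_one, Nat.choose_zero_right, Nat.choose_one_right,
      Nat.cast_one, mul_one]
    norm_num
  intro i i'
  have e : (X ^ p - 1 - (p : ℤ_[p])^(j+1) • A) i i'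
      = (∑ m ∈ Finset.range (q+1), (b ^ (m+2) * ((p.choose (m+2) : ℕ) : Mat)) i i')
        + (p : ℤ_[p]) * ((b - (p : ℤ_[p])^j • A) i i') := by
    rw [hsplit]
    simp only [Matrix.sub_apply, Matrix.add_apply, Matrix.smul_apply, smul_eq_mul,
      Matrix.sum_apply, ← Matrix.diagonal_natCast, Matrix.mul_diagonal, Matrix.one_apply]
    ring
  rw [e]
  apply dvd_add
  · apply Finset.dvd_sum
    intro m hm
    rw [← Matrix.diagonal_natCast, Matrix.mul_diagonal]
    rcases eq_or_lt_of_le (show m + 2 ≤ p by simp at hm; omega) with hmp | hmp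
    · refine dvd_trans (pow_dvd_pow _ (show j + 2 ≤ j * (m+2) by nlinarith)) ?_
      rw [pow_mul]
      exact ((entry_dvd_pow hbdvd (m+2) i i').mul_right _)
    · have hpc : (p : ℤ_[p]) ∣ (p.choose (m+2) : ℤ_[p]) := by
        have := (Fact.out : p.Prime).dvd_choose_self (by omega) hmp
        exact_mod_cast (Nat.cast_dvd_cast this : (p:ℤ_[p]) ∣ _)
      refine dvd_trans (pow_dvd_pow _ (show j + 2 ≤ j * (m+2) + 1 by nlinarith)) ?_
      rw [pow_succ, pow_mul]
      exact mul_dvd_mul (entry_dvd_pow hbdvd (m+2) i i') hpc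
  · rw [pow_succ']
    exact mul_dvd_mul_left _ (h i i')

/-- Iterated version: if `X ≡ 1 + p A (mod p²)` then
`X^(p^m) ≡ 1 + p^(m+1) A (mod p^(m+2))`. -/
lemma pow_p_iter (hp3 : 3 ≤ p) {X A : Mat}
    (h : ∀ i i', (p : ℤ_[p]) ^ 2 ∣ (X - 1 - (p : ℤ_[p]) ^ 1 • A) i i') :
    ∀ m : ℕ, ∀ i i', (p : ℤ_[p]) ^ (m+2) ∣ (X ^ (p ^ m) - 1 - (p : ℤ_[p]) ^ (m+1) • A) i i' := by
  intro m
  induction m with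
  | zero => simpa using h
  | succ n ih =>
    have := pow_p_step hp3 (j := n + 1) (by omega) ih
    intro i i'
    have hpow : (X ^ (p ^ n)) ^ p = X ^ (p ^ (n+1)) := by
      rw [← pow_mul, pow_succ]
    rw [hpow] at this
    simpa using this i i'

lemma toZModPow_dvd {x y : ℤ_[p]} {k : ℕ}
    (h : PadicInt.toZModPow k x = PadicInt.toZModPow k y) : (p : ℤ_[p])^k ∣ x - y := by
  have : x - y ∈ RingHom.ker (PadicInt.toZModPow k (p := p)) := by
    simp [RingHom.mem_ker, map_sub, h]
  rw [PadicInt.ker_toZModPow, Ideal.mem_span_singleton] at this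
  exact this

/-- A matrix `1 + p A` is invertible over `ℤ_[p]`. -/
lemma isUnit_one_add_p_smul (A : Mat) : IsUnit (1 + (p : ℤ_[p]) • A : Mat) := by
  rw [Matrix.isUnit_iff_isUnit_det]
  set D := (1 + (p : ℤ_[p]) • A : Mat).det with hD
  have hmap : ((1 + (p : ℤ_[p]) • A : Mat).map (PadicInt.toZMod : ℤ_[p] →+* ZMod p)) = 1 := by
    ext i j
    simp [Matrix.map_apply, Matrix.add_apply, Matrix.smul_apply, smul_eq_mul, Matrix.one_apply]
  have hdet1 : PadicInt.toZMod D = 1 := by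
    have := RingHom.map_det (PadicInt.toZMod : ℤ_[p] →+* ZMod p) (1 + (p : ℤ_[p]) • A : Mat)
    rw [RingHom.mapMatrix_apply, hmap] at this
    simpa [hD] using this
  by_contra hnu
  have hmem : D ∈ IsLocalRing.maximalIdeal ℤ_[p] := hnu
  rw [← PadicInt.ker_toZMod, RingHom.mem_ker] at hmem
  rw [hdet1] at hmem
  exact one_ne_zero hmem

lemma inv_entry_dvd {c : ℤ_[p]} (h g : GL (Fin d) ℤ_[p])
    (hd : ∀ i j, c ∣ (h.val - g.val) i j) :
    ∀ i j, c ∣ ((↑(h⁻¹) : Mat) - (↑(g⁻¹) : Mat)) i j := by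
  have key : (↑(h⁻¹) : Mat) - (↑(g⁻¹) : Mat)
      = (↑(h⁻¹) : Mat) * ((g.val - h.val) * (↑(g⁻¹) : Mat)) := by
    have h1 : (↑(h⁻¹) : Mat) * h.val = 1 := by
      rw [← Units.val_mul, inv_mul_cancel, Units.val_one]
    have h2 : g.val * (↑(g⁻¹) : Mat) = 1 := by
      rw [← Units.val_mul, mul_inv_cancel, Units.val_one]
    rw [sub_mul, h2, mul_sub, mul_one, ← mul_assoc, h1, one_mul]
  rw [key]
  exact fun i j => entry_dvd_mul_left _ (entry_dvd_mul_right _ (entry_dvd_symm hd)) i j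

section Main

variable (hp3 : 3 ≤ p) (H : Subgroup (GL (Fin d) ℤ_[p]))
  (hsurj : Subgroup.map (glRed p d 2) H = ⊤)

include hsurj in
/-- Level-2 approximation from the surjectivity hypothesis. -/
lemma approx_two (g : GL (Fin d) ℤ_[p]) :
    ∃ h ∈ H, ∀ i j, (p : ℤ_[p])^2 ∣ (h.val - g.val) i j := by
  have : glRed p d 2 g ∈ Subgroup.map (glRed p d 2) H := by rw [hsurj]; trivial
  obtain ⟨h, hH, hgl⟩ := this
  refine ⟨h, hH, fun i j => ?_⟩
  rw [Matrix.sub_apply]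
  apply toZModPow_dvd
  have h1 := Matrix.GeneralLinearGroup.map_apply (PadicInt.toZModPow 2 (p := p)) i j h
  have h2 := Matrix.GeneralLinearGroup.map_apply (PadicInt.toZModPow 2 (p := p)) i j g
  calc PadicInt.toZModPow 2 (h.val i j) = (glRed p d 2 h).val i j := h1.symm
    _ = (glRed p d 2 g).val i j := by rw [hgl]
    _ = PadicInt.toZModPow 2 (g.val i j) := h2

include hp3 hsurj in
lemma approx_all (k : ℕ) (g : GL (Fin d) ℤ_[p]) :
    ∃ h ∈ H, ∀ i j, (p : ℤ_[p])^(k+2) ∣ (h.val - g.val) i j := by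
  induction k generalizing g with
  | zero => simpa using approx_two H hsurj g
  | succ k ih =>
    obtain ⟨h, hH, hdvd⟩ := ih g
    set n := k + 2 with hn
    -- B = g h⁻¹ = 1 + p^n A
    set B : Mat := g.val * (↑(h⁻¹) : Mat) with hBdef
    have hB : ∀ i j, (p : ℤ_[p])^n ∣ (B - 1) i j := by
      have hform : B - 1 = (g.val - h.val) * (↑(h⁻¹) : Mat) := by
        rw [sub_mul, hBdef]
        congr 1
        rw [← Units.val_mul, mul_inv_cancel, Units.val_one]
      rw [hform]
      exact entry_dvd_mul_right _ (entry_dvd_symm hdvd)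
    let A : Mat := Matrix.of fun i j => (hB i j).choose
    have hAspec : ∀ i j, (B - 1) i j = (p : ℤ_[p])^n * A i j := fun i j => (hB i j).choose_spec
    have hBeq : B = 1 + (p : ℤ_[p])^n • A := by
      ext i j
      have := hAspec i j
      rw [Matrix.sub_apply] at this
      simp only [Matrix.add_apply, Matrix.smul_apply, smul_eq_mul]
      linear_combination this
    have hu := isUnit_one_add_p_smul (p := p) A
    let u : GL (Fin d) ℤ_[p] := hu.unit
    have huval : (u : Mat) = 1 + (p : ℤ_[p]) • A := hu.unit_spec
    obtain ⟨h₀, h₀H, h₀dvd⟩ := approx_two H hsurj u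
    have hbase : ∀ i j, (p : ℤ_[p])^2 ∣ ((h₀ : Mat) - 1 - (p : ℤ_[p])^1 • A) i j := by
      intro i j
      have : (h₀ : Mat) - 1 - (p : ℤ_[p])^1 • A = (h₀ : Mat) - (u : Mat) := by
        rw [huval, pow_one, sub_sub]
      rw [this]
      exact h₀dvd i j
    have hiter := pow_p_iter hp3 hbase (k+1)
    refine ⟨h₀ ^ (p^(k+1)) * h, H.mul_mem (H.pow_mem h₀H _) hH, ?_⟩
    have hgval : (g : Mat) = (1 + (p : ℤ_[p])^n • A) * (h : Mat) := by
      rw [← hBeq, hBdef, mul_assoc, ← Units.val_mul, inv_mul_cancel, Units.val_one, mul_one]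
    have hkey : ((h₀ ^ (p^(k+1)) * h : GL (Fin d) ℤ_[p]) : Mat) - (g : Mat)
        = ((h₀ : Mat) ^ (p^(k+1)) - 1 - (p : ℤ_[p])^(k+2) • A) * (h : Mat) := by
      rw [Units.val_mul, Units.val_pow_eq_pow_val, hgval, sub_sub, ← sub_mul]
    rw [hkey]
    intro i j
    exact entry_dvd_mul_right _ (fun i j => by
      have := hiter i j
      norm_num at this ⊢
      convert this using 2) i j
  

end Main

lemma tendsto_of_entry_dvd (F : ℕ → Mat) (G : Mat)
    (hd : ∀ k i j, (p : ℤ_[p])^(k+2) ∣ (F k - G) i j) :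
    Filter.Tendsto F Filter.atTop (nhds G) := by
  refine tendsto_pi_nhds.2 fun i => ?_; refine tendsto_pi_nhds.2 fun j => ?_
  rw [tendsto_iff_norm_sub_tendsto_zero]
  have hb : ∀ k : ℕ, ‖F k i j - G i j‖ ≤ (p:ℝ)^(-(((k+2):ℕ)):ℤ) := by
    intro k
    rw [PadicInt.norm_le_pow_iff_mem_span_pow, Ideal.mem_span_singleton]
    have := hd k i j; rw [Matrix.sub_apply] at this; exact this
  refine squeeze_zero (fun k => norm_nonneg _) hb ?_
  have heq : ∀ k : ℕ, (p:ℝ)^(-(((k+2):ℕ)):ℤ) = ((p:ℝ)⁻¹)^(k+2) := by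
    intro k; rw [_root_.zpow_neg, zpow_natCast, inv_pow]
  simp only [heq]
  have hp1 : (1:ℝ) < p := by exact_mod_cast (Fact.out : p.Prime).one_lt
  have h1 : (p:ℝ)⁻¹ < 1 := by
    rw [inv_lt_one_iff₀]; right; exact hp1
  exact (tendsto_pow_atTop_nhds_zero_of_lt_one (by positivity) h1).comp
    (Filter.tendsto_add_atTop_nat 2)

end ModPSq

/-- For a prime `p ≥ 3`, if a closed subgroup `H` of `GL_d(ℤ_p)` surjects
onto `GL_d(ℤ/p²ℤ)` under reduction mod `p²`, then `H = GL_d(ℤ_p)`. -/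
theorem mod_p_squared_suffices (p d : ℕ) [Fact p.Prime] (hp : 3 ≤ p)
    (H : Subgroup (GL (Fin d) ℤ_[p]))
    (hclosed : IsClosed (H : Set (GL (Fin d) ℤ_[p])))
    (hsurj : Subgroup.map (glRed p d 2) H = ⊤) :
    H = ⊤ := by
  rw [Subgroup.eq_top_iff']
  intro g
  choose f hfH hfd using fun k => ModPSq.approx_all hp H hsurj k g
  have tendA := ModPSq.tendsto_of_entry_dvd (fun k => ((f k : Matrix (Fin d) (Fin d) ℤ_[p])))
    (g : Matrix (Fin d) (Fin d) ℤ_[p]) hfd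
  have hinvd : ∀ k, ∀ i j, (p : ℤ_[p])^(k+2) ∣
      (((f k)⁻¹ : GL (Fin d) ℤ_[p]) - ((g⁻¹ : GL (Fin d) ℤ_[p]) : Matrix (Fin d) (Fin d) ℤ_[p])) i j :=
    fun k => ModPSq.inv_entry_dvd (f k) g (hfd k)
  have tendB := ModPSq.tendsto_of_entry_dvd _ _ hinvd
  have tend : Filter.Tendsto f Filter.atTop (nhds g) := by
    rw [Units.isInducing_embedProduct.tendsto_nhds_iff]
    exact tendA.prodMk_nhds ((MulOpposite.continuous_op.tendsto _).comp tendB)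
  have hmem := mem_closure_of_tendsto tend (Filter.Eventually.of_forall hfH)
  rwa [hclosed.closure_eq] at hmem
end
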